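/- arXiv:1902.03694 — 2 statements merged into one kernel-verified Lean document; each statement's English description precedes it below -/
import Mathlib

section
/- Let 0 < μ ≤ L, let f be μ-strongly convex with L-Lipschitz gradient on ℝⁿ, with minimizer x⋆. Let X : [0, ∞) → ℝⁿ be twice differentiable with X(0) = x₀, X'(0) = 0, and X''(t) + 2√μ X'(t) + ∇f(X(t)) = 0 for all t ≥ 0. Then for all t ≥ 0, f(X(t)) − f(x⋆) ≤ (3L/2)‖x₀ − x⋆‖² e^{−√μ t / 4}. -/
/-!
Write `s = √μ`. Along the ODE the energy
`E = f X - f x⋆ + ‖X'‖² / 4 + ‖X' + s (X - x⋆)‖² / 4`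
satisfies `E' ≤ -(s / 4) E`: strong convexity between `X` and `x⋆` absorbs the gradient terms and
`‖X' + s (X - x⋆)‖² ≥ 0` absorbs the cross term `⟪X', X - x⋆⟫`. Grönwall gives
`E t ≤ E 0 · exp (-s t / 4)`, and since `∇f x⋆ = 0`, strong convexity and the Lipschitz bound
give `E 0 = f x₀ - f x⋆ + μ ‖x₀ - x⋆‖² / 4 ≤ L ‖x₀ - x⋆‖²`.
-/

open scoped RealInnerProductSpace

open Set Real

theorem le_mul_exp_of_hasDerivWithinAt_le_mul {u u' : ℝ → ℝ} {K : ℝ}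
    (hu : ∀ t ∈ Ici (0 : ℝ), HasDerivWithinAt u (u' t) (Ici 0) t)
    (hbound : ∀ t ∈ Ici (0 : ℝ), u' t ≤ K * u t) :
    ∀ t ∈ Ici (0 : ℝ), u t ≤ u 0 * exp (K * t) := by
  intro t ht
  have hcont : ContinuousOn u (Icc 0 t) := fun τ hτ =>
    (hu τ hτ.1).continuousWithinAt.mono Icc_subset_Ici_self
  have hright : ∀ τ ∈ Ico 0 t, HasDerivWithinAt u (u' τ) (Ici τ) τ := fun τ hτ =>
    (hu τ hτ.1).mono (Ici_subset_Ici.mpr hτ.1)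
  have := le_gronwallBound_of_liminf_deriv_right_le (K := K) (ε := 0) hcont
    (fun τ hτ _ hr => (hright τ hτ).liminf_right_slope_le hr) le_rfl
    (fun τ hτ => (add_zero (K * u τ)).symm ▸ hbound τ hτ.1) t ⟨ht, le_rfl⟩
  rwa [gronwallBound_ε0, sub_zero] at this

section

variable {E : Type*} [NormedAddCommGroup E] [InnerProductSpace ℝ E]

theorem IsLocalMin.hasGradientAt_eq_zero [CompleteSpace E] {f : E → ℝ} {g x : E}
    (hmin : IsLocalMin f x) (hg : HasGradientAt f g x) : g = 0 := by
  simpa using hmin.hasFDerivAt_eq_zero hg.hasFDerivAt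

theorem sub_add_le_inner_of_strong_convexity {f : E → ℝ} {g x y : E} {μ : ℝ}
    (h : f y ≥ f x + ⟪g, y - x⟫ + μ / 2 * ‖y - x‖ ^ 2) :
    f x - f y + μ / 2 * ‖x - y‖ ^ 2 ≤ ⟪g, x - y⟫ := by
  rw [← neg_sub x y, inner_neg_right, norm_neg] at h
  linarith

theorem sub_add_le_mul_sq_of_norm_le {f : E → ℝ} {g x xstar : E} {μ L : ℝ}
    (hsc : f xstar ≥ f x + ⟪g, xstar - x⟫ + μ / 2 * ‖xstar - x‖ ^ 2)
    (hg : ‖g‖ ≤ L * ‖x - xstar‖) :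
    f x - f xstar + μ / 2 * ‖x - xstar‖ ^ 2 ≤ L * ‖x - xstar‖ ^ 2 :=
  calc f x - f xstar + μ / 2 * ‖x - xstar‖ ^ 2 ≤ ⟪g, x - xstar⟫ :=
        sub_add_le_inner_of_strong_convexity hsc
    _ ≤ ‖g‖ * ‖x - xstar‖ := real_inner_le_norm _ _
    _ ≤ L * ‖x - xstar‖ * ‖x - xstar‖ := mul_le_mul_of_nonneg_right hg (norm_nonneg _)
    _ = L * ‖x - xstar‖ ^ 2 := by ring

noncomputable def dampedLyapunov (f : E → ℝ) (xstar : E) (s : ℝ) (x v : E) : ℝ :=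
  f x - f xstar + (‖v‖ ^ 2 + ‖v + s • (x - xstar)‖ ^ 2) / 4

variable {f : E → ℝ} {xstar : E} {s : ℝ}

theorem sub_le_dampedLyapunov (x v : E) : f x - f xstar ≤ dampedLyapunov f xstar s x v := by
  unfold dampedLyapunov
  have := sq_nonneg ‖v‖
  have := sq_nonneg ‖v + s • (x - xstar)‖
  linarith

theorem dampedLyapunov_zero_right (x : E) :
    dampedLyapunov f xstar s x 0 = f x - f xstar + s ^ 2 / 4 * ‖x - xstar‖ ^ 2 := by
  simp only [dampedLyapunov, zero_add, norm_zero, norm_smul, mul_pow, Real.norm_eq_abs, sq_abs]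
  ring

theorem HasDerivWithinAt.dampedLyapunov [CompleteSpace E] {f' : E → E} {X X' : ℝ → E}
    {V A : E} {S : Set ℝ} {t : ℝ} (hgrad : HasGradientAt f (f' (X t)) (X t))
    (hX : HasDerivWithinAt X V S t) (hX' : HasDerivWithinAt X' A S t) :
    HasDerivWithinAt (fun τ => dampedLyapunov f xstar s (X τ) (X' τ))
      (⟪f' (X t), V⟫ + (2 * ⟪X' t, A⟫ + 2 * ⟪X' t + s • (X t - xstar), A + s • V⟫) / 4) S t := by
  have hfX : HasDerivWithinAt (fun τ => f (X τ)) ⟪f' (X t), V⟫ S t := by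
    simpa [InnerProductSpace.toDual_apply_apply, Function.comp_def] using
      hgrad.hasFDerivAt.comp_hasDerivWithinAt t hX
  have hW : HasDerivWithinAt (fun τ => X' τ + s • (X τ - xstar)) (A + s • V) S t :=
    hX'.add ((hX.sub_const xstar).const_smul s)
  exact (hfX.sub_const _).add ((hX'.norm_sq.add hW.norm_sq).div_const 4)

theorem dampedLyapunov_dissipation {Δ : ℝ} {g v w a : E} (hs : 0 ≤ s) (hΔ : 0 ≤ Δ)
    (hg : Δ + s ^ 2 / 2 * ‖w‖ ^ 2 ≤ ⟪g, w⟫) (ha : a + (2 * s) • v + g = 0) :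
    ⟪g, v⟫ + (2 * ⟪v, a⟫ + 2 * ⟪v + s • w, a + s • v⟫) / 4
      ≤ -(s / 4) * (Δ + (‖v‖ ^ 2 + ‖v + s • w‖ ^ 2) / 4) := by
  obtain rfl : a = -((2 * s) • v) - g := by
    rw [← sub_eq_zero, ← ha]; abel
  have hW : ‖v + s • w‖ ^ 2 = ‖v‖ ^ 2 + 2 * s * ⟪v, w⟫ + s ^ 2 * ‖w‖ ^ 2 := by
    rw [norm_add_sq_real, inner_smul_right, norm_smul, mul_pow, Real.norm_eq_abs, sq_abs]
    ring
  -- LHS + (s/4) E = -(s/2)(⟪g,w⟫ - Δ - s²‖w‖²/2) - (3s/16)‖v + s w‖² - (s/4)Δ - (19s/16)‖v‖²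
  have hvw : 0 ≤ s * (‖v‖ ^ 2 + 2 * s * ⟪v, w⟫ + s ^ 2 * ‖w‖ ^ 2) :=
    hW ▸ mul_nonneg hs (sq_nonneg _)
  rw [real_inner_comm] at hg
  rw [hW]
  simp only [inner_add_left, inner_add_right, inner_sub_right, inner_neg_right,
    inner_smul_left, inner_smul_right, real_inner_self_eq_norm_sq, real_inner_comm g v,
    real_inner_comm v w, RCLike.conj_to_real]
  linarith [mul_nonneg hs hΔ, mul_nonneg hs (sq_nonneg ‖v‖), mul_le_mul_of_nonneg_left hg hs]

end

theorem stmt14_general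
    {n : ℕ} (μ L : ℝ) (hμ : 0 < μ)
    (f : EuclideanSpace ℝ (Fin n) → ℝ)
    (f' : EuclideanSpace ℝ (Fin n) → EuclideanSpace ℝ (Fin n))
    (hgrad : ∀ z, HasGradientAt f (f' z) z)
    (hLip : ∀ z w, ‖f' z - f' w‖ ≤ L * ‖z - w‖)
    (hsc : ∀ z w, f w ≥ f z + ⟪f' z, w - z⟫ + μ / 2 * ‖w - z‖ ^ 2)
    (xstar : EuclideanSpace ℝ (Fin n)) (hmin : ∀ z, f xstar ≤ f z)
    (x0 : EuclideanSpace ℝ (Fin n))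
    (X X' X'' : ℝ → EuclideanSpace ℝ (Fin n))
    (hX : ∀ t ∈ Set.Ici (0 : ℝ), HasDerivWithinAt X (X' t) (Set.Ici 0) t)
    (hX' : ∀ t ∈ Set.Ici (0 : ℝ), HasDerivWithinAt X' (X'' t) (Set.Ici 0) t)
    (hX0 : X 0 = x0) (hV0 : X' 0 = 0)
    (hODE : ∀ t ∈ Set.Ici (0 : ℝ),
      X'' t + (2 * Real.sqrt μ) • X' t + f' (X t) = 0)
    : ∀ t ∈ Set.Ici (0 : ℝ),
      f (X t) - f xstar ≤ 3 * L / 2 * ‖x0 - xstar‖ ^ 2 * Real.exp (-(Real.sqrt μ * t) / 4) := by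
  set s := √μ
  have hs : 0 ≤ s := sqrt_nonneg μ
  have hs2 : s ^ 2 = μ := sq_sqrt hμ.le
  have hgstar : f' xstar = 0 :=
    IsLocalMin.hasGradientAt_eq_zero (Filter.Eventually.of_forall hmin) (hgrad xstar)
  have hdecay := le_mul_exp_of_hasDerivWithinAt_le_mul (K := -(s / 4))
    (fun t ht => (hX t ht).dampedLyapunov (xstar := xstar) (s := s) (hgrad (X t)) (hX' t ht))
    (fun t ht => dampedLyapunov_dissipation hs (sub_nonneg.mpr (hmin (X t)))
      (hs2 ▸ sub_add_le_inner_of_strong_convexity (hsc (X t) xstar)) (hODE t ht))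
  have hinit : dampedLyapunov f xstar s x0 0 ≤ 3 * L / 2 * ‖x0 - xstar‖ ^ 2 := by
    have hgap := sub_add_le_mul_sq_of_norm_le (hsc x0 xstar)
      (by simpa [hgstar] using hLip x0 xstar)
    rw [dampedLyapunov_zero_right, hs2]
    linarith [sub_nonneg.mpr (hmin x0), mul_nonneg hμ.le (sq_nonneg ‖x0 - xstar‖)]
  intro t ht
  calc f (X t) - f xstar ≤ dampedLyapunov f xstar s (X t) (X' t) := sub_le_dampedLyapunov _ _
    _ ≤ dampedLyapunov f xstar s x0 0 * exp (-(s / 4) * t) := hX0 ▸ hV0 ▸ hdecay t ht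
    _ ≤ 3 * L / 2 * ‖x0 - xstar‖ ^ 2 * exp (-(s * t) / 4) := by
      rw [show -(s / 4) * t = -(s * t) / 4 by ring]
      exact mul_le_mul_of_nonneg_right hinit (exp_pos _).le

theorem stmt14
    {n : ℕ} (μ L : ℝ) (hμ : 0 < μ) (hμL : μ ≤ L)
    (f : EuclideanSpace ℝ (Fin n) → ℝ)
    (f' : EuclideanSpace ℝ (Fin n) → EuclideanSpace ℝ (Fin n))
    (hgrad : ∀ z, HasGradientAt f (f' z) z)
    (hLip : ∀ z w, ‖f' z - f' w‖ ≤ L * ‖z - w‖)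
    (hsc : ∀ z w, f w ≥ f z + ⟪f' z, w - z⟫ + μ / 2 * ‖w - z‖ ^ 2)
    (xstar : EuclideanSpace ℝ (Fin n)) (hmin : ∀ z, f xstar ≤ f z)
    (x0 : EuclideanSpace ℝ (Fin n))
    (X X' X'' : ℝ → EuclideanSpace ℝ (Fin n))
    (hX : ∀ t ∈ Set.Ici (0 : ℝ), HasDerivWithinAt X (X' t) (Set.Ici 0) t)
    (hX' : ∀ t ∈ Set.Ici (0 : ℝ), HasDerivWithinAt X' (X'' t) (Set.Ici 0) t)
    (hX0 : X 0 = x0) (hV0 : X' 0 = 0)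
    (hODE : ∀ t ∈ Set.Ici (0 : ℝ),
      X'' t + (2 * Real.sqrt μ) • X' t + f' (X t) = 0)
    : ∀ t ∈ Set.Ici (0 : ℝ),
      f (X t) - f xstar ≤ 3 * L / 2 * ‖x0 - xstar‖ ^ 2 * Real.exp (-(Real.sqrt μ * t) / 4) :=
  stmt14_general μ L hμ f f' hgrad hLip hsc xstar hmin x0 X X' X'' hX hX' hX0 hV0 hODE
end

section
/- Let 0 < μ ≤ L, let f be μ-strongly convex with L-Lipschitz gradient on ℝⁿ, with minimizer x⋆, and let 0 < s ≤ μ/(25L²). Then the iterates of the explicit Euler scheme for the low-resolution strongly convex ODE satisfy, for every k ≥ 0, f(x_k) − f(x⋆) ≤ (3L‖x₀ − x⋆‖²/2) (1 − √(μs)/8)^k. -/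
open scoped RealInnerProductSpace

/-! The energy `E(x, v) = f x - f x⋆ + ‖v‖² / 4 + ‖v + 2√μ (x - x⋆)‖² / 4` contracts by the
factor `1 - √(μs) / 8` along the scheme. Expanding one step with the descent lemma, the terms of
`E(x', v') - E(x, v)` of first order in `m = √(μs)` are `-m (⟪∇f x, x - x⋆⟫ + ‖v‖²)`; strong
convexity bounds `⟪∇f x, x - x⋆⟫` below by `f x - f x⋆ + μ/2 ‖x - x⋆‖²`, and the step-size
condition `L √s ≤ √μ / 5` makes every remaining term a small multiple of these. Since `v₀ = 0`,
`E(x₀, v₀) ≤ (L/2 + μ) ‖x₀ - x⋆‖²`, and `E` dominates `f - f x⋆`. -/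

theorem sqrt_mul_le_one_fifth {μ L h : ℝ} (hμ : 0 < μ) (hμL : μ ≤ L) (hh : 0 ≤ h)
    (hLh : L * h ≤ √μ / 5) : √μ * h ≤ 1 / 5 := by
  have hsqrt : 0 < √μ := Real.sqrt_pos.mpr hμ
  have : √μ * (√μ * h) ≤ √μ * (1 / 5) := by
    rw [← mul_assoc, Real.mul_self_sqrt hμ.le]
    nlinarith
  exact le_of_mul_le_mul_left this hsqrt

section

variable {E : Type*} [NormedAddCommGroup E] [InnerProductSpace ℝ E] {f : E → ℝ}

section LipschitzGradient

variable [CompleteSpace E] {f' : E → E} {L : ℝ}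

theorem IsLocalMin.hasGradientAt_eq_zero_s16 {a g : E} (h : IsLocalMin f a)
    (hf : HasGradientAt f g a) : g = 0 :=
  (InnerProductSpace.toDual ℝ E).map_eq_zero_iff.mp
    (h.hasFDerivAt_eq_zero (hasGradientAt_iff_hasFDerivAt.mp hf))

theorem le_add_inner_add_of_lipschitz_gradient (hgrad : ∀ z, HasGradientAt f (f' z) z)
    (hLip : ∀ z w, ‖f' z - f' w‖ ≤ L * ‖z - w‖) (z w : E) :
    f w ≤ f z + ⟪f' z, w - z⟫ + L / 2 * ‖w - z‖ ^ 2 := by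
  set d := w - z
  let φ : ℝ → ℝ := fun t => f (z + t • d) - t * ⟪f' z, d⟫ - L / 2 * t ^ 2 * ‖d‖ ^ 2
  have hφ : ∀ t, HasDerivAt φ (⟪f' (z + t • d) - f' z, d⟫ - L * t * ‖d‖ ^ 2) t := by
    intro t
    have hline : HasDerivAt (fun t : ℝ => z + t • d) d t := by
      simpa using ((hasDerivAt_id t).smul_const d).const_add z
    refine ((((hgrad _).hasFDerivAt.comp_hasDerivAt t hline).sub
      ((hasDerivAt_id t).mul_const ⟪f' z, d⟫)).sub
      (((hasDerivAt_pow 2 t).const_mul (L / 2)).mul_const (‖d‖ ^ 2))).congr_deriv ?_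
    rw [InnerProductSpace.toDual_apply_apply, inner_sub_left]
    ring
  have hanti : AntitoneOn φ (Set.Ici 0) := by
    refine antitoneOn_of_hasDerivWithinAt_nonpos (convex_Ici 0)
      (fun t _ => (hφ t).continuousAt.continuousWithinAt) (fun t _ => (hφ t).hasDerivWithinAt) ?_
    intro t ht
    rw [interior_Ici] at ht
    have : ⟪f' (z + t • d) - f' z, d⟫ ≤ L * t * ‖d‖ ^ 2 :=
      calc ⟪f' (z + t • d) - f' z, d⟫ ≤ ‖f' (z + t • d) - f' z‖ * ‖d‖ := real_inner_le_norm _ _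
        _ ≤ L * ‖t • d‖ * ‖d‖ := by gcongr; simpa using hLip (z + t • d) z
        _ = L * t * ‖d‖ ^ 2 := by rw [norm_smul, Real.norm_of_nonneg ht.le]; ring
    linarith
  have h01 : φ 1 ≤ φ 0 := hanti Set.self_mem_Ici (Set.mem_Ici.mpr zero_le_one) zero_le_one
  calc f w = φ 1 + ⟪f' z, d⟫ + L / 2 * ‖d‖ ^ 2 := by
        simp only [φ, d, one_smul, add_sub_cancel, one_pow, one_mul]; ring
    _ ≤ φ 0 + ⟪f' z, d⟫ + L / 2 * ‖d‖ ^ 2 := by gcongr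
    _ = f z + ⟪f' z, d⟫ + L / 2 * ‖d‖ ^ 2 := by simp [φ]

theorem sq_norm_le_two_mul_sub_of_lipschitz_gradient (hL : 0 < L)
    (hgrad : ∀ z, HasGradientAt f (f' z) z) (hLip : ∀ z w, ‖f' z - f' w‖ ≤ L * ‖z - w‖)
    {xstar : E} (hmin : ∀ z, f xstar ≤ f z) (z : E) :
    ‖f' z‖ ^ 2 ≤ 2 * L * (f z - f xstar) := by
  have hdesc := le_add_inner_add_of_lipschitz_gradient hgrad hLip z (z - L⁻¹ • f' z)
  rw [sub_sub_cancel_left, inner_neg_right, norm_neg, real_inner_smul_right,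
    real_inner_self_eq_norm_sq, norm_smul, Real.norm_of_nonneg (inv_nonneg.mpr hL.le)] at hdesc
  have hgap : L⁻¹ * ‖f' z‖ ^ 2 / 2 ≤ f z - f xstar := by
    have := hmin (z - L⁻¹ • f' z)
    have : L / 2 * (L⁻¹ * ‖f' z‖) ^ 2 = L⁻¹ * ‖f' z‖ ^ 2 / 2 := by field_simp
    linarith
  calc ‖f' z‖ ^ 2 = 2 * L * (L⁻¹ * ‖f' z‖ ^ 2 / 2) := by field_simp
    _ ≤ 2 * L * (f z - f xstar) := by gcongr

end LipschitzGradient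

variable (f) in
noncomputable def lyapunov (μ : ℝ) (xstar x v : E) : ℝ :=
  f x - f xstar + ‖v‖ ^ 2 / 4 + ‖v + (2 * √μ) • (x - xstar)‖ ^ 2 / 4

section lyapunov

variable {μ : ℝ} {xstar : E}

theorem sub_le_lyapunov (x v : E) : f x - f xstar ≤ lyapunov f μ xstar x v := by
  unfold lyapunov
  have : 0 ≤ ‖v‖ ^ 2 / 4 + ‖v + (2 * √μ) • (x - xstar)‖ ^ 2 / 4 := by positivity
  linarith

theorem lyapunov_le (hμ : 0 ≤ μ) (x v : E) :
    lyapunov f μ xstar x v ≤ f x - f xstar + 3 / 4 * ‖v‖ ^ 2 + 2 * μ * ‖x - xstar‖ ^ 2 := by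
  set w := (2 * √μ) • (x - xstar)
  have hw : ‖w‖ ^ 2 = 4 * μ * ‖x - xstar‖ ^ 2 := by
    simp only [w, norm_smul, Real.norm_eq_abs, mul_pow, sq_abs, Real.sq_sqrt hμ]
    ring
  have := norm_add_sq_real v w
  have := norm_sub_sq_real v w
  unfold lyapunov
  linarith [sq_nonneg ‖v - w‖]

variable [CompleteSpace E] {f' : E → E} {L : ℝ}

theorem lyapunov_zero_right_le (hgrad : ∀ z, HasGradientAt f (f' z) z)
    (hLip : ∀ z w, ‖f' z - f' w‖ ≤ L * ‖z - w‖) (hmin : ∀ z, f xstar ≤ f z) (hμ : 0 ≤ μ) (x : E) :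
    lyapunov f μ xstar x 0 ≤ (L / 2 + μ) * ‖x - xstar‖ ^ 2 := by
  have hstar : f' xstar = 0 :=
    IsLocalMin.hasGradientAt_eq_zero_s16 (Filter.Eventually.of_forall hmin) (hgrad xstar)
  have hdesc := le_add_inner_add_of_lipschitz_gradient hgrad hLip xstar x
  rw [hstar, inner_zero_left, add_zero] at hdesc
  simp only [lyapunov, norm_zero, zero_add, norm_smul, Real.norm_eq_abs, mul_pow, sq_abs,
    Real.sq_sqrt hμ]
  linarith

theorem lyapunov_step_sub_le (hgrad : ∀ z, HasGradientAt f (f' z) z)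
    (hLip : ∀ z w, ‖f' z - f' w‖ ≤ L * ‖z - w‖)
    {h : ℝ} {x v x' v' : E} (hx : x' - x = h • v)
    (hv : v' - v = -((2 * (√μ * h)) • v) - h • f' x) :
    lyapunov f μ xstar x' v' - lyapunov f μ xstar x v ≤
      √μ * h * (h * ⟪f' x, v⟫ - ⟪f' x, x - xstar⟫)
        + ((√μ * h) ^ 2 - √μ * h + L * h ^ 2 / 2) * ‖v‖ ^ 2 + h ^ 2 / 2 * ‖f' x‖ ^ 2 := by
  have hdesc := le_add_inner_add_of_lipschitz_gradient hgrad hLip x x'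
  rw [sub_eq_iff_eq_add'] at hx hv
  subst hx hv
  rw [add_sub_cancel_left] at hdesc
  rw [lyapunov, lyapunov, add_sub_right_comm x]
  generalize x - xstar = u
  generalize f' x = g at hdesc ⊢
  simp only [← real_inner_self_eq_norm_sq, inner_add_left, inner_add_right, inner_sub_left,
    inner_sub_right, inner_neg_left, inner_neg_right, real_inner_smul_left,
    real_inner_smul_right, real_inner_comm v g, real_inner_comm u g, real_inner_comm u v]
    at hdesc ⊢
  linarith

theorem lyapunov_step_le (hgrad : ∀ z, HasGradientAt f (f' z) z)
    (hLip : ∀ z w, ‖f' z - f' w‖ ≤ L * ‖z - w‖)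
    (hsc : ∀ z w, f w ≥ f z + ⟪f' z, w - z⟫ + μ / 2 * ‖w - z‖ ^ 2)
    (hmin : ∀ z, f xstar ≤ f z) (hμ : 0 < μ) (hμL : μ ≤ L)
    {h : ℝ} (hh : 0 ≤ h) (hLh : L * h ≤ √μ / 5) {x v x' v' : E} (hx : x' - x = h • v)
    (hv : v' - v = -((2 * (√μ * h)) • v) - h • f' x) :
    lyapunov f μ xstar x' v' ≤ (1 - √μ * h / 8) * lyapunov f μ xstar x v := by
  have hL : 0 < L := hμ.trans_le hμL
  have hdiff := lyapunov_step_sub_le (xstar := xstar) hgrad hLip hx hv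
  have hbound := lyapunov_le (f := f) (xstar := xstar) hμ.le x v
  set m := √μ * h
  set u := x - xstar
  set g := f' x
  have hm : 0 ≤ m := by positivity
  have hm5 : m ≤ 1 / 5 := sqrt_mul_le_one_fifth hμ hμL hh hLh
  have hLh2 : L * h ^ 2 ≤ m / 5 := by nlinarith
  have hstar : f' xstar = 0 :=
    IsLocalMin.hasGradientAt_eq_zero_s16 (Filter.Eventually.of_forall hmin) (hgrad xstar)
  have hgap : 0 ≤ f x - f xstar := sub_nonneg.mpr (hmin x)
  have hgu : f x - f xstar + μ / 2 * ‖u‖ ^ 2 ≤ ⟪g, u⟫ := by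
    have := hsc x xstar
    rw [← neg_sub, inner_neg_right, norm_neg] at this
    linarith
  have hgv : h * ⟪g, v⟫ ≤ (μ * ‖u‖ ^ 2 + ‖v‖ ^ 2) / 10 := by
    have hg : ‖g‖ ≤ L * ‖u‖ := by simpa [hstar] using hLip x xstar
    calc h * ⟪g, v⟫ ≤ h * (L * ‖u‖ * ‖v‖) := by
          gcongr
          exact (real_inner_le_norm g v).trans (by gcongr)
      _ = L * h * (‖u‖ * ‖v‖) := by ring
      _ ≤ √μ / 5 * (‖u‖ * ‖v‖) := by gcongr
      _ ≤ (μ * ‖u‖ ^ 2 + ‖v‖ ^ 2) / 10 := by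
          nlinarith [sq_nonneg (√μ * ‖u‖ - ‖v‖), Real.sq_sqrt hμ.le]
  have hgg : h ^ 2 / 2 * ‖g‖ ^ 2 ≤ m / 5 * (f x - f xstar) := by
    have := sq_norm_le_two_mul_sub_of_lipschitz_gradient hL hgrad hLip hmin x
    nlinarith
  have hmm : m * m ≤ m / 5 := by nlinarith
  -- Now `hdiff` is at most `-m (4/5 (f x - f x⋆) + 2/5 μ ‖u‖² + 3/5 ‖v‖²)`, while by `hbound`
  -- `m / 8 * lyapunov f μ xstar x v ≤ m (1/8 (f x - f x⋆) + 1/4 μ ‖u‖² + 3/32 ‖v‖²)`.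
  have hv2 := sq_nonneg ‖v‖
  linarith [mul_le_mul_of_nonneg_left hgu hm, mul_le_mul_of_nonneg_left hgv hm,
    mul_le_mul_of_nonneg_left hbound hm, mul_le_mul_of_nonneg_right hmm hv2,
    mul_le_mul_of_nonneg_right hLh2 hv2, mul_nonneg hm hgap, mul_nonneg hm hv2,
    mul_nonneg hm (by positivity : 0 ≤ μ * ‖u‖ ^ 2)]

end lyapunov

end

theorem stmt16
    {n : ℕ} (μ L : ℝ) (hμ : 0 < μ) (hμL : μ ≤ L)
    (f : EuclideanSpace ℝ (Fin n) → ℝ)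
    (f' : EuclideanSpace ℝ (Fin n) → EuclideanSpace ℝ (Fin n))
    (hgrad : ∀ z, HasGradientAt f (f' z) z)
    (hLip : ∀ z w, ‖f' z - f' w‖ ≤ L * ‖z - w‖)
    (hsc : ∀ z w, f w ≥ f z + ⟪f' z, w - z⟫ + μ / 2 * ‖w - z‖ ^ 2)
    (xstar : EuclideanSpace ℝ (Fin n)) (hmin : ∀ z, f xstar ≤ f z)
    (s : ℝ) (hs0 : 0 < s) (hs : s ≤ μ / (25 * L ^ 2))
    (x v : ℕ → EuclideanSpace ℝ (Fin n))
    (hv0 : v 0 = 0)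
    (hx : ∀ k : ℕ, x (k + 1) - x k = Real.sqrt s • v k)
    (hv : ∀ k : ℕ, v (k + 1) - v k = -((2 * Real.sqrt (μ * s)) • v k)
      - Real.sqrt s • f' (x k))
    : ∀ k : ℕ, f (x k) - f xstar ≤ 3 * L * ‖x 0 - xstar‖ ^ 2 / 2 * (1 - Real.sqrt (μ * s) / 8) ^ k := by
  have hL : 0 < L := hμ.trans_le hμL
  have hsqrt : √(μ * s) = √μ * √s := Real.sqrt_mul hμ.le s
  have hLh : L * √s ≤ √μ / 5 := by
    rw [le_div_iff₀ (by positivity)] at hs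
    refine (pow_le_pow_iff_left₀ (by positivity) (by positivity) two_ne_zero).mp ?_
    rw [mul_pow, div_pow, Real.sq_sqrt hs0.le, Real.sq_sqrt hμ.le]
    linarith
  have hrate : 0 ≤ 1 - √(μ * s) / 8 := by
    linarith [hsqrt ▸ sqrt_mul_le_one_fifth hμ hμL (Real.sqrt_nonneg s) hLh]
  have hdecay : ∀ k, lyapunov f μ xstar (x (k + 1)) (v (k + 1)) ≤
      (1 - √(μ * s) / 8) * lyapunov f μ xstar (x k) (v k) := fun k => by
    rw [hsqrt]
    exact lyapunov_step_le hgrad hLip hsc hmin hμ hμL (Real.sqrt_nonneg s) hLh (hx k)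
      (by rw [hv k, hsqrt])
  have hinit : lyapunov f μ xstar (x 0) (v 0) ≤ 3 * L * ‖x 0 - xstar‖ ^ 2 / 2 := by
    rw [hv0]
    refine (lyapunov_zero_right_le hgrad hLip hmin hμ.le (x 0)).trans ?_
    nlinarith [sq_nonneg ‖x 0 - xstar‖]
  intro k
  calc f (x k) - f xstar ≤ lyapunov f μ xstar (x k) (v k) := sub_le_lyapunov _ _
    _ ≤ (1 - √(μ * s) / 8) ^ k * lyapunov f μ xstar (x 0) (v 0) :=
      le_geom (u := fun k => lyapunov f μ xstar (x k) (v k)) hrate k fun j _ => hdecay j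
    _ ≤ 3 * L * ‖x 0 - xstar‖ ^ 2 / 2 * (1 - √(μ * s) / 8) ^ k := by
      rw [mul_comm]; gcongr
end
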